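/- Let A be an integral domain which is an algebra over ℚ, let D : A → A be a derivation, let f ∈ A, and let n ≥ 1 be a natural number. Then D(f) lies in the principal ideal (f) if and only if D(fⁿ) lies in the principal ideal (fⁿ). -/

import Mathlib

/-! Since `D (f ^ n) = n • f ^ (n - 1) • D f`, the divisibility `f ^ n ∣ D (f ^ n)` is
`f ^ (n - 1) * f ∣ n * f ^ (n - 1) * D f`; cancelling the unit `n` and the nonzero factor
`f ^ (n - 1)` leaves `f ∣ D f`. -/

theorem isUnit_natCast_of_algebra_rat {A : Type*} [Ring A] [Algebra ℚ A] {n : ℕ} (hn : n ≠ 0) :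
    IsUnit (n : A) := by
  simpa only [map_natCast] using
    (Ne.isUnit (Nat.cast_ne_zero.mpr hn : (n : ℚ) ≠ 0)).map (algebraMap ℚ A)

theorem Derivation.pow_dvd_apply_pow_iff {R A : Type*} [CommSemiring R] [CommRing A]
    [IsDomain A] [Algebra R A] (D : Derivation R A A) (f : A) {n : ℕ} (hn : IsUnit (n : A)) :
    f ^ n ∣ D (f ^ n) ↔ f ∣ D f := by
  obtain ⟨m, rfl⟩ : ∃ m, n = m + 1 :=
    Nat.exists_eq_succ_of_ne_zero fun h => by simp [h] at hn
  rcases eq_or_ne f 0 with rfl | hf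
  · simp
  rw [D.leibniz_pow, nsmul_eq_mul, smul_eq_mul, hn.dvd_mul_left, Nat.add_sub_cancel, pow_succ,
    mul_dvd_mul_iff_left (pow_ne_zero m hf)]

/-- Let `A` be an integral domain which is a `ℚ`-algebra, `D` a derivation of `A`, `f ∈ A`
and `n ≥ 1`. Then `D f ∈ (f)` if and only if `D (f ^ n) ∈ (f ^ n)`. -/
theorem derivation_mem_span_iff_pow {A : Type*} [CommRing A] [IsDomain A] [Algebra ℚ A]
    (D : Derivation ℚ A A) (f : A) (n : ℕ) (hn : 1 ≤ n) :
    D f ∈ Ideal.span {f} ↔ D (f ^ n) ∈ Ideal.span {f ^ n} := by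
  have hn_unit : IsUnit (n : A) := isUnit_natCast_of_algebra_rat (Nat.one_le_iff_ne_zero.mp hn)
  simp only [Ideal.mem_span_singleton]
  exact (D.pow_dvd_apply_pow_iff f hn_unit).symm
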